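/- arXiv:1907.05772 — 10 statements merged into one kernel-verified Lean document; each statement's English description precedes it below -/
import Mathlib

section
/- Let k, d be positive integers, Σ a finite set, Φ ∈ Σ^{k×d} a signal matrix, L ∈ ℝ^{k×d} a loss matrix, Π ⊆ [k], and T a directed in-tree on vertex set Π. Suppose that for every edge e = (a,b) ∈ T there is a function w_e : [k] × Σ → ℝ such that Σ_{c=1}^k w_e(c, Φ_{c,x}) = L_{a,x} − L_{b,x} for all x ∈ [d]. Define G : [k] × Σ → ℝ^k by G(a,σ)_b = Σ_{e ∈ path_T(b)} w_e(a,σ) for b ∈ Π. Then for all b, c ∈ Π and all x ∈ [d], Σ_{a=1}^k ( G(a, Φ_{a,x})_b − G(a, Φ_{a,x})_c ) = L_{b,x} − L_{c,x}. -/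
/-- A directed in-tree on a finite vertex type `V`: every vertex has a parent
(the root is its own parent) and every vertex reaches the root by iterating
the parent map.  The edges are the pairs `(v, par v)` for `v ≠ root`, and the
path from `v` to the root is the set of edges traversed by iterating `par`. -/
structure InTree (V : Type*) [Fintype V] [DecidableEq V] where
  root : V
  par : V → V
  par_root : par root = root
  reaches : ∀ v : V, ∃ n : ℕ, par^[n] v = root

variable {V : Type*} [Fintype V] [DecidableEq V]

/-- The edge set of an in-tree. -/
def InTree.edges (T : InTree V) : Finset (V × V) :=
  (Finset.univ.filter (fun v => v ≠ T.root)).image (fun v => (v, T.par v))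

/-- The depth of a vertex: the number of steps needed to reach the root. -/
def InTree.depth (T : InTree V) (v : V) : ℕ := Nat.find (T.reaches v)

/-- The set of edges on the directed path from `v` to the root. -/
def InTree.path (T : InTree V) (v : V) : Finset (V × V) :=
  (Finset.range (T.depth v)).image (fun i => (T.par^[i] v, T.par^[i + 1] v))

/-! Summing `G` over the actions turns the path sum defining `G(·)_b` into a sum, over the edges
`(u, par u)` of the path from `b`, of `L_u - L_{par u}`; this telescopes to `L_b - L_root`, and the
root terms cancel in the difference for `b` and `c`. -/

namespace InTree

variable (T : InTree V)

lemma iterate_depth (v : V) : T.par^[T.depth v] v = T.root :=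
  Nat.find_spec (T.reaches v)

lemma iterate_ne_root_of_lt_depth (v : V) {i : ℕ} (hi : i < T.depth v) :
    T.par^[i] v ≠ T.root :=
  Nat.find_min (T.reaches v) hi

/-- If `par^[i] v = par^[j] v` with `i < j`, the root would be reached after
`depth v - (j - i)` steps, contradicting the minimality of the depth. -/
lemma injOn_iterate (v : V) :
    Set.InjOn (fun i => T.par^[i] v) (Finset.range (T.depth v)) := by
  intro i hi j hj hij
  simp only [Finset.coe_range, Set.mem_Iio] at hi hj
  by_contra hne
  wlog hlt : i < j generalizing i j
  · exact this (hi := hj) (hj := hi) (hij := hij.symm) (hne := Ne.symm hne) (by omega)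
  have hroot : T.par^[T.depth v - (j - i)] v = T.root := by
    calc T.par^[T.depth v - (j - i)] v = T.par^[T.depth v - j] (T.par^[i] v) := by
          rw [← Function.iterate_add_apply]; congr 1; omega
      _ = T.par^[T.depth v - j] (T.par^[j] v) := by rw [show T.par^[i] v = T.par^[j] v from hij]
      _ = T.root := by
          rw [← Function.iterate_add_apply, Nat.sub_add_cancel hj.le, T.iterate_depth]
  exact T.iterate_ne_root_of_lt_depth v (by omega : T.depth v - (j - i) < T.depth v) hroot

lemma sum_path {M : Type*} [AddCommMonoid M] (v : V) (f : V × V → M) :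
    ∑ e ∈ T.path v, f e = ∑ i ∈ Finset.range (T.depth v), f (T.par^[i] v, T.par^[i + 1] v) :=
  Finset.sum_image fun _ hi _ hj hij => T.injOn_iterate v hi hj (congrArg Prod.fst hij)

lemma path_subset_edges (v : V) : T.path v ⊆ T.edges := by
  intro e he
  obtain ⟨i, hi, rfl⟩ := Finset.mem_image.mp he
  have hne := T.iterate_ne_root_of_lt_depth v (Finset.mem_range.mp hi)
  exact Finset.mem_image.mpr ⟨T.par^[i] v, Finset.mem_filter.mpr ⟨Finset.mem_univ _, hne⟩,
    by rw [Function.iterate_succ_apply']⟩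

lemma sum_path_eq_sub_root {M : Type*} [AddCommGroup M] {W : V × V → M} {g : V → M}
    (hW : ∀ e ∈ T.edges, W e = g e.1 - g e.2) (v : V) :
    ∑ e ∈ T.path v, W e = g v - g T.root := by
  rw [Finset.sum_congr rfl fun e he => hW e (T.path_subset_edges v he),
    T.sum_path v fun e => g e.1 - g e.2, Finset.sum_range_sub' (fun i => g (T.par^[i] v)),
    T.iterate_depth, Function.iterate_zero_apply]

end InTree

theorem stmt0_general (k d : ℕ) (S : Type*)
    (Φ : Fin k → Fin d → S) (L : Fin k → Fin d → ℝ)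
    (Pa : Finset (Fin k))
    (T : InTree {a : Fin k // a ∈ Pa})
    (w : ({a : Fin k // a ∈ Pa} × {a : Fin k // a ∈ Pa}) → Fin k → S → ℝ)
    (hw : ∀ e ∈ T.edges, ∀ x : Fin d,
      ∑ c : Fin k, w e c (Φ c x) = L e.1.1 x - L e.2.1 x)
    (G : Fin k → S → Fin k → ℝ)
    (hG : ∀ (a : Fin k) (σ : S) (b : {a : Fin k // a ∈ Pa}),
      G a σ b.1 = ∑ e ∈ T.path b, w e a σ) :
    ∀ (b c : {a : Fin k // a ∈ Pa}) (x : Fin d),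
      ∑ a : Fin k, (G a (Φ a x) b.1 - G a (Φ a x) c.1) = L b.1 x - L c.1 x := by
  intro b c x
  have sum_G_eq : ∀ v : {a : Fin k // a ∈ Pa},
      ∑ a : Fin k, G a (Φ a x) v.1 = L v.1 x - L T.root.1 x := by
    intro v
    simp_rw [hG]
    rw [Finset.sum_comm]
    exact T.sum_path_eq_sub_root (g := fun u => L u.1 x) (fun e he => hw e he x) v
  rw [Finset.sum_sub_distrib, sum_G_eq b, sum_G_eq c]
  ring

theorem stmt0 (k d : ℕ) (hk : 0 < k) (hd : 0 < d) (S : Type*) [Fintype S]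
    (Φ : Fin k → Fin d → S) (L : Fin k → Fin d → ℝ)
    (Pa : Finset (Fin k))
    (T : InTree {a : Fin k // a ∈ Pa})
    (w : ({a : Fin k // a ∈ Pa} × {a : Fin k // a ∈ Pa}) → Fin k → S → ℝ)
    (hw : ∀ e ∈ T.edges, ∀ x : Fin d,
      ∑ c : Fin k, w e c (Φ c x) = L e.1.1 x - L e.2.1 x)
    (G : Fin k → S → Fin k → ℝ)
    (hG : ∀ (a : Fin k) (σ : S) (b : {a : Fin k // a ∈ Pa}),
      G a σ b.1 = ∑ e ∈ T.path b, w e a σ) :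
    ∀ (b c : {a : Fin k // a ∈ Pa}) (x : Fin d),
      ∑ a : Fin k, (G a (Φ a x) b.1 - G a (Φ a x) c.1) = L b.1 x - L c.1 x :=
  stmt0_general k d S Φ L Pa T w hw G hG
end

section
/- Let k, n be positive integers, ŷ_1, …, ŷ_n ∈ ℝ^k arbitrary vectors, and η_1 ≥ η_2 ≥ ⋯ ≥ η_n > 0 a non-increasing sequence of positive reals. For each t ∈ [n] define q_t ∈ ℝ^k by q_{t,a} = exp(−η_t Σ_{s=1}^{t−1} ŷ_{s,a}) / Σ_{b=1}^k exp(−η_t Σ_{s=1}^{t−1} ŷ_{s,b}). Then for every a* ∈ [k], Σ_{t=1}^n Σ_{a=1}^k q_{t,a} (ŷ_{t,a} − ŷ_{t,a*}) ≤ log(k)/η_n + Σ_{t=1}^n Ψ_{q_t}(η_t ŷ_t)/η_t. -/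
/-- `Ψ_q(z) = ∑_a q_a (exp(-z_a) + z_a - 1)`. -/
noncomputable def Psi {k : ℕ} (q z : Fin k → ℝ) : ℝ :=
  ∑ a, q a * (Real.exp (-z a) + z a - 1)

/-!
Potential argument. Let `L_t = ∑_{s<t} ŷ_s` and `Φ_η(L) = (log k - log ∑_a exp(-η L_a)) / η`.
Since `q_t` is the Gibbs distribution of `η_t L_t`, `∑_a q_{t,a} exp(-η_t ŷ_{t,a})` equals
`exp(-η_t (Φ_{η_t}(L_{t+1}) - Φ_{η_t}(L_t)))`, so `log x ≤ x - 1` gives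
`⟨q_t, ŷ_t⟩ ≤ Ψ_{q_t}(η_t ŷ_t)/η_t + Φ_{η_t}(L_{t+1}) - Φ_{η_t}(L_t)`.
By the power-mean inequality `Φ_η(L)` is non-increasing in `η`, so for a non-increasing learning
rate these differences telescope to at most `Φ_{η_n}(L_{n+1}) ≤ L_{n+1,a*} + log k / η_n`.
-/

open Finset Real

lemma Fin.sum_le_sub_of_le_succ_sub {M : Type*} [AddCommGroup M] [PartialOrder M]
    [IsOrderedAddMonoid M] {n : ℕ} (u : Fin n → M) (Φ : ℕ → M)
    (h : ∀ t : Fin n, u t ≤ Φ (t + 1) - Φ t) : ∑ t, u t ≤ Φ n - Φ 0 := by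
  rw [← Finset.sum_range_sub, ← Fin.sum_univ_eq_sum_range (fun t => Φ (t + 1) - Φ t)]
  exact Finset.sum_le_sum fun t _ => h t

section ExpWeights

variable {ι : Type*} [Fintype ι]

noncomputable def expWeights (η : ℝ) (L : ι → ℝ) (a : ι) : ℝ :=
  exp (-(η * L a)) / ∑ b, exp (-(η * L b))

noncomputable def softMin (η : ℝ) (L : ι → ℝ) : ℝ :=
  (log (Fintype.card ι) - log (∑ a, exp (-(η * L a)))) / η

lemma sum_exp_pos [Nonempty ι] (f : ι → ℝ) : 0 < ∑ a, exp (f a) :=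
  Finset.sum_pos (fun _ _ => exp_pos _) univ_nonempty

lemma sum_expWeights [Nonempty ι] (η : ℝ) (L : ι → ℝ) : ∑ a, expWeights η L a = 1 := by
  simp only [expWeights]
  rw [← Finset.sum_div, div_self (sum_exp_pos _).ne']

@[simp]
lemma softMin_zero (η : ℝ) : softMin η (0 : ι → ℝ) = 0 := by
  simp [softMin]

lemma softMin_le {η : ℝ} (hη : 0 < η) (L : ι → ℝ) (a : ι) :
    softMin η L ≤ L a + log (Fintype.card ι) / η := by
  have : -(η * L a) ≤ log (∑ b, exp (-(η * L b))) := by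
    have : Nonempty ι := ⟨a⟩
    rw [le_log_iff_exp_le (sum_exp_pos _)]
    exact Finset.single_le_sum (f := fun b => exp (-(η * L b))) (fun b _ => (exp_pos _).le)
      (mem_univ a)
  rw [softMin, div_le_iff₀ hη, add_mul, div_mul_cancel₀ _ hη.ne']
  linarith

lemma softMin_le_softMin [Nonempty ι] (L : ι → ℝ) {η' η : ℝ} (hη' : 0 < η') (h : η' ≤ η) :
    softMin η L ≤ softMin η' L := by
  have hη : 0 < η := hη'.trans_le h
  set c : ℝ := (Fintype.card ι : ℝ)
  have hc : 0 < c := Nat.cast_pos.2 Fintype.card_pos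
  -- Jensen for `x ↦ x ^ (η / η')` against the uniform weights
  have jensen := rpow_arith_mean_le_arith_mean_rpow univ (fun _ => c⁻¹)
    (fun a => exp (-(η' * L a))) (fun _ _ => by positivity)
    (by simp [Finset.card_univ, c, hc.ne']) (fun _ _ => (exp_pos _).le)
    ((one_le_div hη').2 h)
  have hpow : ∀ a, exp (-(η' * L a)) ^ (η / η') = exp (-(η * L a)) := fun a => by
    rw [← exp_mul]; congr 1; field_simp
  simp only [hpow, ← Finset.mul_sum] at jensen
  have hlog := log_le_log (by have := sum_exp_pos fun a => -(η' * L a); positivity) jensen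
  rw [log_rpow (by have := sum_exp_pos fun a => -(η' * L a); positivity),
    log_mul (inv_ne_zero hc.ne') (sum_exp_pos _).ne',
    log_mul (inv_ne_zero hc.ne') (sum_exp_pos _).ne', log_inv] at hlog
  rw [softMin, softMin, div_le_div_iff₀ hη hη']
  rw [div_mul_eq_mul_div, div_le_iff₀ hη'] at hlog
  nlinarith

end ExpWeights

lemma Psi_eq_of_sum_eq_one {k : ℕ} {q : Fin k → ℝ} (hq : ∑ a, q a = 1) (z : Fin k → ℝ) :
    Psi q z = ∑ a, q a * exp (-z a) + ∑ a, q a * z a - 1 := by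
  simp only [Psi, mul_sub, mul_add, mul_one, Finset.sum_sub_distrib, Finset.sum_add_distrib, hq]

lemma sum_expWeights_mul_le {k : ℕ} [Nonempty (Fin k)] {η : ℝ} (hη : 0 < η)
    (L y : Fin k → ℝ) :
    ∑ a, expWeights η L a * y a
      ≤ Psi (expWeights η L) (fun a => η * y a) / η + (softMin η (L + y) - softMin η L) := by
  set Z := ∑ a, exp (-(η * L a))
  set Z' := ∑ a, exp (-(η * (L + y) a))
  have hZ : 0 < Z := sum_exp_pos _
  have hZ' : 0 < Z' := sum_exp_pos _
  have hmix : ∑ a, expWeights η L a * exp (-(η * y a)) = Z' / Z := by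
    simp only [Z', Finset.sum_div, expWeights, div_mul_eq_mul_div, ← exp_add, Pi.add_apply,
      mul_add, neg_add]
    rfl
  have hsoft : softMin η (L + y) - softMin η L = -log (Z' / Z) / η := by
    rw [softMin, softMin, log_div hZ'.ne' hZ.ne']
    ring
  have hlog := log_le_sub_one_of_pos (div_pos hZ' hZ)
  rw [Psi_eq_of_sum_eq_one (sum_expWeights η L), hmix, hsoft, ← add_div, le_div_iff₀ hη]
  simp only [mul_left_comm _ η, ← Finset.mul_sum]
  nlinarith

section CumLoss

variable {n : ℕ} {ι : Type*}

noncomputable def cumLoss (y : Fin n → ι → ℝ) (m : ℕ) (a : ι) : ℝ :=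
  ∑ s ∈ univ.filter (fun s : Fin n => (s : ℕ) < m), y s a

@[simp]
lemma cumLoss_zero (y : Fin n → ι → ℝ) : cumLoss y 0 = 0 := by
  ext a; simp [cumLoss]

lemma cumLoss_succ (y : Fin n → ι → ℝ) (t : Fin n) : cumLoss y (t + 1) = cumLoss y t + y t := by
  ext a
  have : univ.filter (fun s : Fin n => (s : ℕ) < t + 1)
      = insert t (univ.filter (fun s : Fin n => (s : ℕ) < t)) := by
    ext s; simp [Fin.ext_iff]; omega
  simp only [cumLoss, this, sum_insert (by simp : t ∉ univ.filter (fun s : Fin n => (s : ℕ) < t)),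
    Pi.add_apply, add_comm]

lemma cumLoss_self (y : Fin n → ι → ℝ) (a : ι) : cumLoss y n a = ∑ s, y s a := by
  simp [cumLoss]

end CumLoss

theorem stmt1 (k n : ℕ) (hn : 0 < n)
    (y : Fin n → Fin k → ℝ) (η : Fin n → ℝ)
    (hpos : ∀ t, 0 < η t) (hmono : ∀ s t : Fin n, s ≤ t → η t ≤ η s)
    (q : Fin n → Fin k → ℝ)
    (hq : ∀ t a, q t a =
      Real.exp (-(η t * ∑ s ∈ Finset.univ.filter (fun s => s < t), y s a)) /
        ∑ b, Real.exp (-(η t * ∑ s ∈ Finset.univ.filter (fun s => s < t), y s b)))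
    (astar : Fin k) :
    ∑ t, ∑ a, q t a * (y t a - y t astar)
      ≤ Real.log k / η ⟨n - 1, by omega⟩
        + ∑ t, Psi (q t) (fun a => η t * y t a) / η t := by
  have : Nonempty (Fin k) := ⟨astar⟩
  have hq' : ∀ t, q t = expWeights (η t) (cumLoss y t) := fun t => funext (hq t)
  -- the learning rate frozen at its last value after round `n`
  let ηc (m : ℕ) : ℝ := η ⟨min m (n - 1), by omega⟩
  let Φ (m : ℕ) : ℝ := softMin (ηc m) (cumLoss y m)
  have hround (t : Fin n) :
      ∑ a, q t a * y t a - Psi (q t) (fun a => η t * y t a) / η t ≤ Φ (t + 1) - Φ t := by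
    have hηt : ηc t = η t := congrArg η (Fin.ext (by simp; omega))
    have hstep := sum_expWeights_mul_le (hpos t) (cumLoss y t) (y t)
    have hle : t ≤ ⟨min (t + 1) (n - 1), by omega⟩ :=
      Fin.le_def.2 (show (t : ℕ) ≤ min ((t : ℕ) + 1) (n - 1) by omega)
    have hrate := softMin_le_softMin (cumLoss y (t + 1)) (hpos _) (hmono _ _ hle)
    rw [← cumLoss_succ] at hstep
    simp only [Φ, hηt, hq']
    linarith
  have hlast : Φ n ≤ ∑ t, y t astar + log k / η ⟨n - 1, by omega⟩ := by
    simpa [Φ, ηc, cumLoss_self] using softMin_le (hpos _) (cumLoss y n) astar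
  have hregret : ∑ t, ∑ a, q t a * (y t a - y t astar)
      = ∑ t, ∑ a, q t a * y t a - ∑ t, y t astar := by
    simp only [mul_sub, Finset.sum_sub_distrib, ← Finset.sum_mul, hq', sum_expWeights, one_mul]
  have htelescope := Fin.sum_le_sub_of_le_succ_sub _ Φ hround
  simp only [Finset.sum_sub_distrib, Φ, cumLoss_zero, softMin_zero] at htelescope
  linarith
end

section
/- Let L ∈ [0,1]^{k×d} and consider the bandit game, where the signal equals the loss (Φ = L). Fix η > 0 and a probability vector q ∈ ℝ^k with q_a > 0 for all a. Set p = q and G(a,σ) = σ e_a for a ∈ [k], σ ∈ [0,1]. Then for every x ∈ [d]: (i) Σ_{a=1}^k G(a, L_{a,x}) = L e_x, so the loss-difference estimator is unbiased and the bias term of the optimisation objective vanishes; and (ii) (1/η²) Σ_{a=1}^k q_a Ψ_q( η L_{a,x} e_a / q_a ) ≤ k/2. Consequently the optimisation objective of the exploration-by-optimisation problem at (p, G) is at most k/2 for every outcome x, so opt_q(η) ≤ k/2. -/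
/-!
With `G(a, σ) = σ e_a` the estimator `∑_a G(a, L_{a,x})` is exactly `L e_x`, so the bias term is
zero. The `a`-th stability summand only sees the coordinate `a`, where it is
`q_a² (e^{-t} + t - 1)` with `t = η L_{a,x} / q_a ≥ 0`; the bound `e^{-t} ≤ 1 - t + t²/2` turns it
into `(η L_{a,x})²/2 ≤ η²/2`, and summing over the `k` arms gives `k/2` after dividing by `η²`.
-/

open Real Finset

theorem exp_neg_le_one_sub_add_sq_div_two {t : ℝ} (ht : 0 ≤ t) :
    exp (-t) ≤ 1 - t + t ^ 2 / 2 := by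
  let f : ℝ → ℝ := fun t => 1 - t + t ^ 2 / 2 - exp (-t)
  have hf : ∀ t, HasDerivAt f (t - 1 + exp (-t)) t := fun t => by
    refine ((((hasDerivAt_id t).const_sub 1).add ((hasDerivAt_pow 2 t).div_const 2)).sub
      (hasDerivAt_neg t).exp).congr_deriv ?_
    norm_num
    ring
  have hmono : Monotone f := monotone_of_deriv_nonneg (fun t => (hf t).differentiableAt)
    fun t => by rw [(hf t).deriv]; linarith [one_sub_le_exp_neg t]
  simpa [f] using hmono ht

theorem Psi_eq_of_forall_ne_eq_zero {k : ℕ} (q z : Fin k → ℝ) {a : Fin k}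
    (hz : ∀ b ≠ a, z b = 0) : Psi q z = q a * (exp (-z a) + z a - 1) :=
  sum_eq_single a (fun b _ hb => by simp [hz b hb]) (by simp)

theorem mul_Psi_le_sq_div_two {k : ℕ} (q z : Fin k → ℝ) {a : Fin k} (hqa : 0 < q a)
    (hz : ∀ b ≠ a, z b = 0) {s : ℝ} (hs : 0 ≤ s) (hza : z a = s / q a) :
    q a * Psi q z ≤ s ^ 2 / 2 := by
  have hexp := exp_neg_le_one_sub_add_sq_div_two (div_nonneg hs hqa.le)
  rw [Psi_eq_of_forall_ne_eq_zero q z hz, hza]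
  calc q a * (q a * (exp (-(s / q a)) + s / q a - 1))
      ≤ q a * (q a * ((s / q a) ^ 2 / 2)) := by gcongr; linarith
    _ = s ^ 2 / 2 := by field_simp

theorem stmt5_general (k d : ℕ)
    (L : Fin k → Fin d → ℝ) (hL : ∀ a x, L a x ∈ Set.Icc (0 : ℝ) 1)
    (η : ℝ) (hη : 0 < η)
    (q : Fin k → ℝ) (hq0 : ∀ a, 0 < q a)
    (G : Fin k → ℝ → Fin k → ℝ)
    (hGdef : ∀ a σ b, G a σ b = if b = a then σ else 0) :
    ∀ x : Fin d,
      -- (i) unbiasedness: `∑_a G(a, Φ_{a,x}) = L e_x`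
      (∀ b, ∑ a, G a (L a x) b = L b x) ∧
      -- the bias term of the objective vanishes
      ((∑ b, q b * (L b x - ∑ a, G a (L a x) b))
          + (⨆ c : Fin k, ((∑ a, G a (L a x) c) - L c x)) = 0) ∧
      -- (ii) the stability term is at most `k/2`
      ((1 / η ^ 2) * ∑ a, q a * Psi q (fun b => η * G a (L a x) b / q a)
          ≤ k / 2) ∧
      -- the whole objective at `(p, G)` with `p = q` is at most `k/2`
      (((∑ a, (q a - q a) * L a x)
            + ((∑ b, q b * (L b x - ∑ a, G a (L a x) b))
              + (⨆ c : Fin k, ((∑ a, G a (L a x) c) - L c x)))) / η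
          + (1 / η ^ 2) * ∑ a, q a * Psi q (fun b => η * G a (L a x) b / q a)
          ≤ k / 2) := by
  intro x
  have hunbiased : ∀ b, ∑ a, G a (L a x) b = L b x := fun b => by simp [hGdef]
  have hbias : (∑ b, q b * (L b x - ∑ a, G a (L a x) b))
      + (⨆ c : Fin k, ((∑ a, G a (L a x) c) - L c x)) = 0 := by
    simp [hunbiased]
  have harm : ∀ a, q a * Psi q (fun b => η * G a (L a x) b / q a) ≤ η ^ 2 / 2 := fun a =>
    calc _ ≤ (η * L a x) ^ 2 / 2 :=
          mul_Psi_le_sq_div_two q _ (hq0 a) (fun b hb => by simp [hGdef, hb])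
            (mul_nonneg hη.le (hL a x).1) (by simp [hGdef])
      _ ≤ η ^ 2 / 2 := by
          rw [mul_pow]
          gcongr ?_ / 2
          exact mul_le_of_le_one_right (sq_nonneg η) (pow_le_one₀ (hL a x).1 (hL a x).2)
  have hstab : (1 / η ^ 2) * ∑ a, q a * Psi q (fun b => η * G a (L a x) b / q a) ≤ k / 2 :=
    calc _ ≤ (1 / η ^ 2) * (k * (η ^ 2 / 2)) := by
          gcongr
          simpa only [sum_const, card_univ, Fintype.card_fin, nsmul_eq_mul]
            using sum_le_sum (s := univ) fun a _ => harm a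
      _ = k / 2 := by field_simp
  refine ⟨hunbiased, hbias, hstab, ?_⟩
  rw [hbias]
  simpa using hstab

/-- Bandit game: the signal equals the loss, `p = q` and `G(a,σ) = σ e_a`.
The estimator is unbiased, the bias term vanishes, the stability term is at
most `k/2`, and hence the exploration-by-optimisation objective at `(p, G)`
is at most `k/2` for every outcome, so `opt_q(η) ≤ k/2`. -/
theorem stmt5 (k d : ℕ) (hk : 0 < k) (hd : 0 < d)
    (L : Fin k → Fin d → ℝ) (hL : ∀ a x, L a x ∈ Set.Icc (0 : ℝ) 1)
    (η : ℝ) (hη : 0 < η)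
    (q : Fin k → ℝ) (hq0 : ∀ a, 0 < q a) (hq1 : ∑ a, q a = 1)
    (G : Fin k → ℝ → Fin k → ℝ)
    (hGdef : ∀ a σ b, G a σ b = if b = a then σ else 0) :
    ∀ x : Fin d,
      -- (i) unbiasedness: `∑_a G(a, Φ_{a,x}) = L e_x`
      (∀ b, ∑ a, G a (L a x) b = L b x) ∧
      -- the bias term of the objective vanishes
      ((∑ b, q b * (L b x - ∑ a, G a (L a x) b))
          + (⨆ c : Fin k, ((∑ a, G a (L a x) c) - L c x)) = 0) ∧
      -- (ii) the stability term is at most `k/2`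
      ((1 / η ^ 2) * ∑ a, q a * Psi q (fun b => η * G a (L a x) b / q a)
          ≤ k / 2) ∧
      -- the whole objective at `(p, G)` with `p = q` is at most `k/2`
      (((∑ a, (q a - q a) * L a x)
            + ((∑ b, q b * (L b x - ∑ a, G a (L a x) b))
              + (⨆ c : Fin k, ((∑ a, G a (L a x) c) - L c x)))) / η
          + (1 / η ^ 2) * ∑ a, q a * Psi q (fun b => η * G a (L a x) b / q a)
          ≤ k / 2) :=
  stmt5_general k d L hL η hη q hq0 G hGdef
end

section
/- Let L ∈ [0,1]^{k×d} and consider the full information game, where the signal of every action at outcome x is the full loss column Φ_{a,x} = L e_x = (L_{1,x},…,L_{k,x}) ∈ [0,1]^k. Fix η > 0 and a probability vector q ∈ ℝ^k with q_a > 0 for all a. Set p = q and G(a, σ) = q_a σ for σ ∈ [0,1]^k. Then for every x ∈ [d]: (i) Σ_{a=1}^k G(a, Φ_{a,x}) = L e_x, so the estimator is unbiased and the bias term of the optimisation objective vanishes; and (ii) (1/η²) Σ_{a=1}^k q_a Ψ_q( η L e_x ) ≤ 1/2. Consequently the optimisation objective of the exploration-by-optimisation problem at (p, G) is at most 1/2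 for every outcome x, so opt_q(η) ≤ 1/2. -/
open Finset Set

/- `(1 - z + z ^ 2 / 2) (1 + z + z ^ 2 / 2 + z ^ 3 / 6) = 1 + z ^ 3 / 6 + z ^ 4 / 12 + z ^ 5 / 12`,
and the second factor is the cubic Taylor lower bound for `exp z`. -/
theorem Real.exp_neg_le_one_sub_add_sq_div_two {z : ℝ} (hz : 0 ≤ z) :
    Real.exp (-z) ≤ 1 - z + z ^ 2 / 2 := by
  have hcubic : 1 + z + z ^ 2 / 2 + z ^ 3 / 6 ≤ Real.exp z := by
    have := Real.sum_le_exp_of_nonneg hz 4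
    norm_num [Finset.sum_range_succ, Nat.factorial] at this
    linarith
  have hquad : 0 < 1 - z + z ^ 2 / 2 := by nlinarith [sq_nonneg (z - 1)]
  rw [Real.exp_neg, inv_le_iff_one_le_mul₀ (Real.exp_pos z)]
  nlinarith [mul_le_mul_of_nonneg_right hcubic hquad.le, pow_nonneg hz 3, pow_nonneg hz 4,
    pow_nonneg hz 5]

theorem Psi_le_sq_div_two {k : ℕ} {q z : Fin k → ℝ} {c : ℝ} (hq0 : ∀ a, 0 ≤ q a)
    (hq1 : ∑ a, q a = 1) (hz : ∀ a, z a ∈ Icc 0 c) : Psi q z ≤ c ^ 2 / 2 :=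
  calc Psi q z ≤ ∑ a, q a * (c ^ 2 / 2) := by
        refine sum_le_sum fun a _ => mul_le_mul_of_nonneg_left ?_ (hq0 a)
        obtain ⟨hz0, hzc⟩ := hz a
        have := Real.exp_neg_le_one_sub_add_sq_div_two hz0
        nlinarith
    _ = c ^ 2 / 2 := by rw [← sum_mul, hq1, one_mul]

theorem stmt6_general (k d : ℕ)
    (L : Fin k → Fin d → ℝ) (hL : ∀ a x, L a x ∈ Set.Icc (0 : ℝ) 1)
    (η : ℝ) (hη : 0 < η)
    (q : Fin k → ℝ) (hq0 : ∀ a, 0 < q a) (hq1 : ∑ a, q a = 1)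
    (G : Fin k → (Fin k → ℝ) → Fin k → ℝ)
    (hGdef : ∀ a σ b, G a σ b = q a * σ b) :
    ∀ x : Fin d,
      -- (i) unbiasedness: `∑_a G(a, Φ_{a,x}) = L e_x`
      (∀ b, ∑ a, G a (fun c => L c x) b = L b x) ∧
      -- the bias term of the objective vanishes
      ((∑ b, q b * (L b x - ∑ a, G a (fun c => L c x) b))
          + (⨆ c : Fin k, ((∑ a, G a (fun c' => L c' x) c) - L c x)) = 0) ∧
      -- (ii) the stability term is at most `1/2`
      ((1 / η ^ 2) * ∑ a, q a * Psi q (fun b => η * L b x) ≤ 1 / 2) ∧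
      -- the whole objective at `(p, G)` with `p = q` is at most `1/2`
      (((∑ a, (q a - q a) * L a x)
            + ((∑ b, q b * (L b x - ∑ a, G a (fun c => L c x) b))
              + (⨆ c : Fin k, ((∑ a, G a (fun c' => L c' x) c) - L c x)))) / η
          + (1 / η ^ 2) * ∑ a, q a *
              Psi q (fun b => η * G a (fun c => L c x) b / q a)
          ≤ 1 / 2) := by
  intro x
  have hunbiased : ∀ b, ∑ a, G a (fun c => L c x) b = L b x := fun b => by
    simp only [hGdef, ← sum_mul, hq1, one_mul]
  have hbias : (∑ b, q b * (L b x - ∑ a, G a (fun c => L c x) b))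
      + (⨆ c : Fin k, ((∑ a, G a (fun c' => L c' x) c) - L c x)) = 0 := by
    simp only [hunbiased, sub_self, mul_zero, sum_const_zero, Real.iSup_const_zero, add_zero]
  have hstab : (1 / η ^ 2) * ∑ a, q a * Psi q (fun b => η * L b x) ≤ 1 / 2 := by
    have hPsi : Psi q (fun b => η * L b x) ≤ η ^ 2 / 2 :=
      Psi_le_sq_div_two (fun a => (hq0 a).le) hq1 fun b =>
        ⟨mul_nonneg hη.le (hL b x).1, mul_le_of_le_one_right hη.le (hL b x).2⟩
    rw [← sum_mul, hq1, one_mul, one_div, inv_mul_le_iff₀ (by positivity)]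
    linarith
  refine ⟨hunbiased, hbias, hstab, ?_⟩
  have hrescale : ∀ a, (fun b => η * G a (fun c => L c x) b / q a) = fun b => η * L b x :=
    fun a => funext fun b => by rw [hGdef]; field_simp [(hq0 a).ne']
  simpa only [sub_self, zero_mul, sum_const_zero, hbias, zero_add, zero_div, hrescale] using hstab

/-- Full information game: the signal of every action at outcome `x` is the
full loss column `L e_x`, `p = q` and `G(a, σ) = q_a σ`.  The estimator is
unbiased, the bias term vanishes, the stability term is at most `1/2`, and
hence the exploration-by-optimisation objective at `(p, G)` is at most `1/2`
for every outcome, so `opt_q(η) ≤ 1/2`. -/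
theorem stmt6 (k d : ℕ) (hk : 0 < k) (hd : 0 < d)
    (L : Fin k → Fin d → ℝ) (hL : ∀ a x, L a x ∈ Set.Icc (0 : ℝ) 1)
    (η : ℝ) (hη : 0 < η)
    (q : Fin k → ℝ) (hq0 : ∀ a, 0 < q a) (hq1 : ∑ a, q a = 1)
    (G : Fin k → (Fin k → ℝ) → Fin k → ℝ)
    (hGdef : ∀ a σ b, G a σ b = q a * σ b) :
    ∀ x : Fin d,
      -- (i) unbiasedness: `∑_a G(a, Φ_{a,x}) = L e_x`
      (∀ b, ∑ a, G a (fun c => L c x) b = L b x) ∧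
      -- the bias term of the objective vanishes
      ((∑ b, q b * (L b x - ∑ a, G a (fun c => L c x) b))
          + (⨆ c : Fin k, ((∑ a, G a (fun c' => L c' x) c) - L c x)) = 0) ∧
      -- (ii) the stability term is at most `1/2`
      ((1 / η ^ 2) * ∑ a, q a * Psi q (fun b => η * L b x) ≤ 1 / 2) ∧
      -- the whole objective at `(p, G)` with `p = q` is at most `1/2`
      (((∑ a, (q a - q a) * L a x)
            + ((∑ b, q b * (L b x - ∑ a, G a (fun c => L c x) b))
              + (⨆ c : Fin k, ((∑ a, G a (fun c' => L c' x) c) - L c x)))) / η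
          + (1 / η ^ 2) * ∑ a, q a *
              Psi q (fun b => η * G a (fun c => L c x) b / q a)
          ≤ 1 / 2) :=
  stmt6_general k d L hL η hη q hq0 hq1 G hGdef
end

section
/- Let L ∈ [0,1]^{k×d}, Σ a finite set, Φ ∈ Σ^{k×d}, and let G : [k] × Σ → ℝ^k satisfy Σ_{a=1}^k ( G(a, Φ_{a,x})_b − G(a, Φ_{a,x})_c ) = L_{b,x} − L_{c,x} for all b, c ∈ [k] and x ∈ [d] (an unbiased estimation function). Let β = max_{a,σ,b} |G(a,σ)_b|, c_G = max(1, 2kβ), and suppose 0 < η ≤ 1/c_G². Let q ∈ ℝ^k be a probability vector, γ = kβ√η, and p = (1−γ) q + γ 𝟙/k. Then p is a probability vector, η G(a, Φ_{a,x})_b / p_a ≥ −1 for all a, b, x, and for every x ∈ [d]: (1/η)(p − q)ᵀ L e_x + (1/η²) Σ_{a=1}^k p_a Ψ_q( η G(a, Φ_{a,x}) / p_a ) ≤ 2kβ/√η. -/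
/-!
The mixing `p = (1 - γ) q + γ 𝟙 / k` costs at most `γ` in the transfer term, since
`p - q = γ (𝟙 / k - q)` and `L ∈ [0, 1]`. In exchange every `p a` is at least `γ / k = β √η`,
so each rescaled estimate `z = η G / p a` satisfies `|z| ≤ √η ≤ 1`. On that range
`exp (-z) + z - 1 ≤ z²`, which gives `p a · Ψ_q(z) ≤ η β √η`. Summing over the `k` actions, both
terms are `k β / √η`.
-/

open Finset

lemma exp_neg_add_sub_one_le_sq {z : ℝ} (hz : |z| ≤ 1) : Real.exp (-z) + z - 1 ≤ z ^ 2 := by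
  have h := Real.abs_exp_sub_one_sub_id_le (x := -z) (by rwa [abs_neg])
  linarith [le_abs_self (Real.exp (-z) - 1 - -z), neg_sq z]

section Psi

variable {k : ℕ} {q : Fin k → ℝ}

lemma Psi_le_sq_of_abs_le (hq0 : ∀ a, 0 ≤ q a) (hq1 : ∑ a, q a = 1) {z : Fin k → ℝ} {t : ℝ}
    (ht : t ≤ 1) (hz : ∀ a, |z a| ≤ t) : Psi q z ≤ t ^ 2 := by
  calc Psi q z ≤ ∑ a, q a * t ^ 2 := by
        refine sum_le_sum fun a _ => mul_le_mul_of_nonneg_left ?_ (hq0 a)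
        calc Real.exp (-z a) + z a - 1 ≤ z a ^ 2 := exp_neg_add_sub_one_le_sq ((hz a).trans ht)
          _ = |z a| ^ 2 := (sq_abs _).symm
          _ ≤ t ^ 2 := pow_le_pow_left₀ (abs_nonneg _) (hz a) 2
    _ = t ^ 2 := by rw [← sum_mul, hq1, one_mul]

lemma abs_div_le_of_le_mul {v r s p : ℝ} (hp : 0 ≤ p) (hs : 0 ≤ s) (hv : |v| ≤ r)
    (hr : r ≤ s * p) : |v / p| ≤ s := by
  rcases hp.eq_or_lt with rfl | hp
  · simpa using hs
  · rw [abs_div, abs_of_pos hp, div_le_iff₀ hp]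
    linarith

lemma mul_Psi_div_le (hq0 : ∀ a, 0 ≤ q a) (hq1 : ∑ a, q a = 1) {v : Fin k → ℝ} {p r s : ℝ}
    (hp : 0 ≤ p) (hr : 0 ≤ r) (hs : s ≤ 1) (hv : ∀ a, |v a| ≤ r) (hrp : r ≤ s * p) :
    p * Psi q (fun a => v a / p) ≤ r * s := by
  rcases hp.eq_or_lt with rfl | hp
  · simp only [zero_mul]
    nlinarith
  have hrp' : r / p ≤ s := (div_le_iff₀ hp).2 hrp
  have hz : ∀ a, |v a / p| ≤ r / p := fun a => by
    rw [abs_div, abs_of_pos hp]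
    exact div_le_div_of_nonneg_right (hv a) hp.le
  calc p * Psi q (fun a => v a / p) ≤ p * (r / p) ^ 2 :=
        mul_le_mul_of_nonneg_left (Psi_le_sq_of_abs_le hq0 hq1 (hrp'.trans hs) hz) hp.le
    _ = r * (r / p) := by field_simp
    _ ≤ r * s := mul_le_mul_of_nonneg_left hrp' hr

lemma sum_mul_Psi_div_le (hq0 : ∀ a, 0 ≤ q a) (hq1 : ∑ a, q a = 1) {v : Fin k → Fin k → ℝ}
    {p : Fin k → ℝ} {r s : ℝ} (hp : ∀ a, 0 ≤ p a) (hr : 0 ≤ r) (hs : s ≤ 1)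
    (hv : ∀ a b, |v a b| ≤ r) (hrp : ∀ a, r ≤ s * p a) :
    ∑ a, p a * Psi q (fun b => v a b / p a) ≤ k * (r * s) := by
  calc _ ≤ #univ • (r * s) := sum_le_card_nsmul _ _ _ fun a _ =>
        mul_Psi_div_le hq0 hq1 (hp a) hr hs (hv a) (hrp a)
    _ = k * (r * s) := by rw [card_univ, Fintype.card_fin, nsmul_eq_mul]

end Psi

section Mixing

variable {k : ℕ} {q p : Fin k → ℝ} {γ : ℝ}

lemma sum_eq_one_of_mix (hk : 0 < k) (hq1 : ∑ a, q a = 1)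
    (hp : ∀ a, p a = (1 - γ) * q a + γ / k) : ∑ a, p a = 1 := by
  simp only [hp, sum_add_distrib, ← mul_sum, hq1, sum_const, card_univ, Fintype.card_fin,
    nsmul_eq_mul]
  field_simp
  ring

lemma div_le_of_mix (hq0 : ∀ a, 0 ≤ q a) (hγ1 : γ ≤ 1)
    (hp : ∀ a, p a = (1 - γ) * q a + γ / k) (a : Fin k) : γ / k ≤ p a := by
  rw [hp a]
  linarith [mul_nonneg (sub_nonneg.2 hγ1) (hq0 a)]

lemma sum_sub_mul_le_of_mix (hk : 0 < k) (hq0 : ∀ a, 0 ≤ q a) (hγ0 : 0 ≤ γ)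
    (hp : ∀ a, p a = (1 - γ) * q a + γ / k) {L : Fin k → ℝ} (hL : ∀ a, L a ∈ Set.Icc (0 : ℝ) 1) :
    ∑ a, (p a - q a) * L a ≤ γ := by
  have hterm : ∀ a ∈ univ, (p a - q a) * L a ≤ γ / k := fun a _ => by
    obtain ⟨hL0, hL1⟩ := hL a
    have hγk : 0 ≤ γ / k := by positivity
    calc (p a - q a) * L a = γ / k * L a - γ * (q a * L a) := by rw [hp a]; ring
      _ ≤ γ / k := by nlinarith [mul_nonneg hγ0 (mul_nonneg (hq0 a) hL0)]
  calc ∑ a, (p a - q a) * L a ≤ #univ • (γ / k) := sum_le_card_nsmul _ _ _ hterm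
    _ = γ := by
      rw [card_univ, Fintype.card_fin, nsmul_eq_mul]
      field_simp

end Mixing

lemma sqrt_mul_le_one_of_le_one_div_sq {η c : ℝ} (hη : 0 ≤ η) (hc : 0 ≤ c)
    (h : η ≤ 1 / c ^ 2) : Real.sqrt η * c ≤ 1 := by
  rcases hc.eq_or_lt with rfl | hc
  · simp
  rw [← Real.sqrt_sq hc.le, ← Real.sqrt_mul hη]
  exact Real.sqrt_le_one.2 ((le_div_iff₀ (by positivity)).1 h)

lemma le_iSup_iSup_iSup_of_finite {ι κ μ : Type*} [Finite ι] [Finite κ] [Finite μ]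
    (f : ι → κ → μ → ℝ) (i : ι) (j : κ) (l : μ) : f i j l ≤ ⨆ i, ⨆ j, ⨆ l, f i j l :=
  le_ciSup_of_le (Finite.bddAbove_range _) i <|
    le_ciSup_of_le (Finite.bddAbove_range _) j <| le_ciSup (Finite.bddAbove_range _) l

theorem stmt7_general (k d : ℕ) (hk : 0 < k) (S : Type*) [Fintype S]
    (L : Fin k → Fin d → ℝ) (hL : ∀ a x, L a x ∈ Set.Icc (0 : ℝ) 1)
    (Φ : Fin k → Fin d → S)
    (G : Fin k → S → Fin k → ℝ)
    (β : ℝ) (hβ : β = ⨆ a : Fin k, ⨆ σ : S, ⨆ b : Fin k, |G a σ b|)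
    (cG : ℝ) (hcG : cG = max 1 (2 * k * β))
    (η : ℝ) (hη : 0 < η) (hηcG : η ≤ 1 / cG ^ 2)
    (q : Fin k → ℝ) (hq0 : ∀ a, 0 ≤ q a) (hq1 : ∑ a, q a = 1)
    (γ : ℝ) (hγ : γ = k * β * Real.sqrt η)
    (p : Fin k → ℝ) (hp : ∀ a, p a = (1 - γ) * q a + γ / k) :
    (∀ a, 0 ≤ p a) ∧ (∑ a, p a = 1) ∧
    (∀ (a b : Fin k) (x : Fin d), -1 ≤ η * G a (Φ a x) b / p a) ∧
    (∀ x : Fin d,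
      (1 / η) * (∑ a, (p a - q a) * L a x)
        + (1 / η ^ 2) * ∑ a, p a * Psi q (fun b => η * G a (Φ a x) b / p a)
        ≤ 2 * k * β / Real.sqrt η) := by
  set s := Real.sqrt η
  have hk' : (0 : ℝ) < k := by exact_mod_cast hk
  have hGβ : ∀ a σ b, |G a σ b| ≤ β := fun a σ b =>
    hβ ▸ le_iSup_iSup_iSup_of_finite (fun a σ b => |G a σ b|) a σ b
  have hβ0 : 0 ≤ β := hβ ▸ Real.iSup_nonneg fun _ => Real.iSup_nonneg fun _ =>
    Real.iSup_nonneg fun _ => abs_nonneg _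
  have hs0 : 0 < s := Real.sqrt_pos.2 hη
  have hcG1 : 1 ≤ cG := hcG ▸ le_max_left _ _
  have hcGβ : 2 * k * β ≤ cG := hcG ▸ le_max_right _ _
  have hscG := sqrt_mul_le_one_of_le_one_div_sq hη.le (by linarith) hηcG
  have hs1 : s ≤ 1 := by nlinarith
  have hγ0 : 0 ≤ γ := hγ ▸ by positivity
  have hγ1 : γ ≤ 1 := by nlinarith [mul_nonneg (mul_nonneg hk'.le hβ0) hs0.le]
  have hγk : γ / k = β * s := by rw [hγ]; field_simp
  have hplow : ∀ a, β * s ≤ p a := fun a => hγk ▸ div_le_of_mix hq0 hγ1 hp a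
  have hp0 : ∀ a, 0 ≤ p a := fun a => (mul_nonneg hβ0 hs0.le).trans (hplow a)
  have hest : ∀ a x b, |η * G a (Φ a x) b| ≤ η * β := fun a x b => by
    rw [abs_mul, abs_of_pos hη]
    exact mul_le_mul_of_nonneg_left (hGβ _ _ _) hη.le
  have hηβ : ∀ a, η * β ≤ s * p a := fun a => by
    calc η * β = s * (β * s) := by rw [← Real.sq_sqrt hη.le]; ring
      _ ≤ s * p a := mul_le_mul_of_nonneg_left (hplow a) hs0.le
  refine ⟨hp0, sum_eq_one_of_mix hk hq1 hp, fun a b x => ?_, fun x => ?_⟩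
  · exact neg_le_of_abs_le ((abs_div_le_of_le_mul (hp0 a) hs0.le (hest a x b) (hηβ a)).trans hs1)
  have htransfer := sum_sub_mul_le_of_mix hk hq0 hγ0 hp (fun a => hL a x)
  have hstab := sum_mul_Psi_div_le hq0 hq1 hp0 (by positivity) hs1 (hest · x) hηβ
  calc (1 / η) * (∑ a, (p a - q a) * L a x)
        + (1 / η ^ 2) * ∑ a, p a * Psi q (fun b => η * G a (Φ a x) b / p a)
      ≤ (1 / η) * γ + (1 / η ^ 2) * (k * (η * β * s)) := by gcongr
    _ = 2 * k * β / s := by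
      rw [hγ, ← Real.sq_sqrt hη.le]
      field_simp
      ring

/-- Globally observable games: with an unbiased estimation function `G` of
magnitude `β = ‖G‖_∞`, `c_G = max(1, 2kβ)`, `η ≤ 1/c_G²`, `γ = kβ√η` and the
mixed distribution `p = (1-γ)q + γ𝟙/k`, the vector `p` is a probability
vector, the loss estimates are bounded below by `-1/η`, and the transfer plus
stability terms are at most `2kβ/√η`. -/
theorem stmt7 (k d : ℕ) (hk : 0 < k) (hd : 0 < d) (S : Type*) [Fintype S]
    [Nonempty S]
    (L : Fin k → Fin d → ℝ) (hL : ∀ a x, L a x ∈ Set.Icc (0 : ℝ) 1)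
    (Φ : Fin k → Fin d → S)
    (G : Fin k → S → Fin k → ℝ)
    (hG : ∀ (b c : Fin k) (x : Fin d),
      ∑ a, (G a (Φ a x) b - G a (Φ a x) c) = L b x - L c x)
    (β : ℝ) (hβ : β = ⨆ a : Fin k, ⨆ σ : S, ⨆ b : Fin k, |G a σ b|)
    (cG : ℝ) (hcG : cG = max 1 (2 * k * β))
    (η : ℝ) (hη : 0 < η) (hηcG : η ≤ 1 / cG ^ 2)
    (q : Fin k → ℝ) (hq0 : ∀ a, 0 ≤ q a) (hq1 : ∑ a, q a = 1)
    (γ : ℝ) (hγ : γ = k * β * Real.sqrt η)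
    (p : Fin k → ℝ) (hp : ∀ a, p a = (1 - γ) * q a + γ / k) :
    (∀ a, 0 ≤ p a) ∧ (∑ a, p a = 1) ∧
    (∀ (a b : Fin k) (x : Fin d), -1 ≤ η * G a (Φ a x) b / p a) ∧
    (∀ x : Fin d,
      (1 / η) * (∑ a, (p a - q a) * L a x)
        + (1 / η ^ 2) * ∑ a, p a * Psi q (fun b => η * G a (Φ a x) b / p a)
        ≤ 2 * k * β / Real.sqrt η) :=
  stmt7_general k d hk S L hL Φ G β hβ cG hcG η hη hηcG q hq0 hq1 γ hγ p hp
end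

section
/- Let k ≥ 3, L ∈ [0,1]^{k×d}, Σ a finite set, Φ ∈ Σ^{k×d}, and a, b ∈ [k]. Suppose there exists a function w : [k] × Σ → ℝ such that Σ_{c=1}^k w(c, Φ_{c,x}) = L_{a,x} − L_{b,x} for all x ∈ [d]. Then there exists such a function w additionally satisfying max_{c,σ} |w(c,σ)| ≤ d^{1/2} k^{d/2}. -/
/-!
Estimability says that `v = L a - L b` lies in the column span of the integer matrix `A` whose
column `(c, σ)` is the indicator of the outcomes on which action `c` shows signal `σ`; each row
of `A` has exactly `k` ones. Keep a maximal linearly independent set of columns `B`, solve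
`B r = v` and put zero on the other columns. For the Gram matrix `G = Bᵀ B`, which is integral
and positive definite, `det G ≥ 1` and `r j ^ 2 ≤ (G⁻¹)ⱼⱼ ‖v‖² ≤ adj(G)ⱼⱼ d`. The adjugate entry
is a principal minor of `G`: a positive semidefinite matrix of some size `m ≤ d` with trace at
most `d k`, hence by AM–GM of determinant at most `(d k / m) ^ m ≤ k ^ d`, where the last step is
`(d / m) ^ m ≤ e ^ (d - m)` together with `e ≤ k`.
-/

open Matrix Finset Real

theorem Real.prod_le_sum_div_card_pow {ι : Type*} (s : Finset ι) (z : ι → ℝ)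
    (hz : ∀ i ∈ s, 0 ≤ z i) : ∏ i ∈ s, z i ≤ ((∑ i ∈ s, z i) / #s) ^ #s := by
  rcases s.eq_empty_or_nonempty with rfl | hs
  · simp
  have hcard : (0 : ℝ) < #s := by exact_mod_cast hs.card_pos
  have amgm := geom_mean_le_arith_mean s 1 z (fun _ _ => zero_le_one) (by simpa using hcard) hz
  simp only [Pi.one_apply, rpow_one, one_mul, sum_const, nsmul_eq_mul, mul_one] at amgm
  rwa [rpow_inv_le_iff_of_pos (prod_nonneg hz) (div_nonneg (sum_nonneg hz) hcard.le) hcard,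
    rpow_natCast] at amgm

theorem Real.mul_div_pow_le_pow {K : ℝ} (hK : exp 1 ≤ K) {m d : ℕ} (hmd : m ≤ d) :
    (d * K / m) ^ m ≤ K ^ d := by
  have hK0 : 0 ≤ K := (exp_pos 1).le.trans hK
  rcases Nat.eq_zero_or_pos m with rfl | hm
  · simpa using one_le_pow₀ ((one_le_exp zero_le_one).trans hK)
  obtain ⟨e, rfl⟩ := Nat.exists_eq_add_of_le hmd
  have hratio : ((m + e : ℕ) / m : ℝ) ^ m ≤ exp 1 ^ e :=
    calc ((m + e : ℕ) / m : ℝ) ^ m = (e / m + 1 : ℝ) ^ m := by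
          push_cast; field_simp; ring
      _ ≤ exp (e / m) ^ m := pow_le_pow_left₀ (by positivity) (add_one_le_exp _) m
      _ = exp 1 ^ e := by rw [← exp_nat_mul, ← exp_nat_mul]; field_simp
  calc ((m + e : ℕ) * K / m) ^ m = K ^ m * ((m + e : ℕ) / m : ℝ) ^ m := by
        rw [← mul_pow]; ring
    _ ≤ K ^ m * K ^ e := by
        gcongr
        exact hratio.trans (pow_le_pow_left₀ (exp_pos 1).le hK e)
    _ = K ^ (m + e) := (pow_add K m e).symm

theorem Matrix.PosSemidef.det_le_trace_div_card_pow {ι : Type*} [Fintype ι] [DecidableEq ι]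
    {M : Matrix ι ι ℝ} (hM : M.PosSemidef) :
    M.det ≤ (M.trace / Fintype.card ι) ^ Fintype.card ι := by
  rw [hM.1.det_eq_prod_eigenvalues, hM.1.trace_eq_sum_eigenvalues]
  simpa using prod_le_sum_div_card_pow univ _ fun i _ => hM.eigenvalues_nonneg i

theorem Matrix.trace_transpose_mul_self {n ι R : Type*} [Fintype n] [Fintype ι] [CommSemiring R]
    (B : Matrix n ι R) : (Bᵀ * B).trace = ∑ x, ∑ p, B x p ^ 2 := by
  simp only [trace, diag, mul_apply, transpose_apply, sq]
  exact sum_comm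

theorem Matrix.dotProduct_self_le_card {n : Type*} [Fintype n] {v : n → ℝ}
    (hv : ∀ x, |v x| ≤ 1) : v ⬝ᵥ v ≤ Fintype.card n :=
  calc v ⬝ᵥ v ≤ ∑ _x : n, (1 : ℝ) := sum_le_sum fun x _ => by
        simpa [← sq, sq_abs] using pow_le_one₀ (abs_nonneg _) (hv x) (n := 2)
    _ = Fintype.card n := by simp

theorem Matrix.adjugate_apply_self {ι R : Type*} [Fintype ι] [DecidableEq ι] [CommRing R]
    (A : Matrix ι ι R) (j : ι) :
    A.adjugate j j = (A.submatrix ((↑) : {i // i ≠ j} → ι) (↑)).det := by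
  rw [adjugate_apply, ← det_submatrix_equiv_self (Equiv.sumCompl (· = j))]
  have hblocks : (A.updateRow j (Pi.single j 1)).submatrix (Equiv.sumCompl (· = j))
      (Equiv.sumCompl (· = j)) =
      fromBlocks 1 0 ((A.updateRow j (Pi.single j 1)).submatrix (↑) (↑))
        (A.submatrix ((↑) : {i // i ≠ j} → ι) (↑)) := by
    ext (⟨i, hi⟩ | ⟨i, hi⟩) (⟨l, hl⟩ | ⟨l, hl⟩) <;> simp_all [updateRow_apply]
  rw [hblocks, det_fromBlocks_zero₁₂, det_one, one_mul]

theorem Matrix.PosSemidef.adjugate_apply_self_nonneg {ι : Type*} [Fintype ι] [DecidableEq ι]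
    {G : Matrix ι ι ℝ} (hG : G.PosSemidef) (j : ι) : 0 ≤ G.adjugate j j := by
  rw [adjugate_apply_self]
  exact (hG.submatrix _).det_nonneg

theorem Matrix.PosSemidef.adjugate_apply_self_le {ι : Type*} [Fintype ι] [DecidableEq ι]
    {G : Matrix ι ι ℝ} (hG : G.PosSemidef) {K : ℝ} (hK : exp 1 ≤ K) {N : ℕ}
    (hcard : Fintype.card ι ≤ N) (htr : G.trace ≤ N * K) (j : ι) : G.adjugate j j ≤ K ^ N := by
  rw [adjugate_apply_self]
  have hminor := hG.submatrix ((↑) : {i // i ≠ j} → ι)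
  have htr' : (G.submatrix ((↑) : {i // i ≠ j} → ι) (↑)).trace ≤ N * K := by
    refine le_trans ?_ htr
    rw [trace, trace, ← Fintype.sum_subtype_add_sum_subtype (· ≠ j)]
    exact le_add_of_nonneg_right (sum_nonneg fun i _ => hG.diag_nonneg)
  have hm : Fintype.card {i // i ≠ j} ≤ N := (Fintype.card_subtype_le _).trans hcard
  calc _ ≤ _ := hminor.det_le_trace_div_card_pow
    _ ≤ (N * K / Fintype.card {i // i ≠ j}) ^ Fintype.card {i // i ≠ j} := by
        gcongr
        exact div_nonneg hminor.trace_nonneg (Nat.cast_nonneg _)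
    _ ≤ K ^ N := mul_div_pow_le_pow hK hm

theorem Matrix.PosSemidef.inv_apply_self_le_adjugate {ι : Type*} [Fintype ι] [DecidableEq ι]
    {G : Matrix ι ι ℝ} (hG : G.PosSemidef) (hdet : 1 ≤ G.det) (j : ι) :
    G⁻¹ j j ≤ G.adjugate j j := by
  rw [inv_def, Ring.inverse_eq_inv', smul_apply, smul_eq_mul]
  exact mul_le_of_le_one_left (hG.adjugate_apply_self_nonneg j) (inv_le_one_of_one_le₀ hdet)

theorem Matrix.one_le_det_map_intCast {ι : Type*} [Fintype ι] [DecidableEq ι] (A : Matrix ι ι ℤ)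
    (hpos : 0 < (A.map (Int.cast : ℤ → ℝ)).det) : 1 ≤ (A.map (Int.cast : ℤ → ℝ)).det := by
  have hcast : (A.map (Int.cast : ℤ → ℝ)).det = A.det :=
    (RingHom.map_det (Int.castRingHom ℝ) A).symm
  rw [hcast] at hpos ⊢
  exact_mod_cast (show (0 : ℤ) < A.det by exact_mod_cast hpos)

theorem Matrix.sq_apply_le_of_mulVec_eq {n ι : Type*} [Fintype n] [Fintype ι] [DecidableEq ι]
    (B : Matrix n ι ℝ) (hB : IsUnit (Bᵀ * B).det) {r : ι → ℝ} {v : n → ℝ} (hr : B *ᵥ r = v)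
    (j : ι) : r j ^ 2 ≤ (Bᵀ * B)⁻¹ j j * (v ⬝ᵥ v) := by
  obtain ⟨G, hG⟩ : ∃ G, Bᵀ * B = G := ⟨_, rfl⟩
  rw [hG] at hB ⊢
  have hGinv : G⁻¹ᵀ = G⁻¹ := by rw [transpose_nonsing_inv, ← hG, transpose_mul, transpose_transpose]
  have hr' : r = G⁻¹ *ᵥ (Bᵀ *ᵥ v) := by
    rw [← hr, mulVec_mulVec, mulVec_mulVec, Matrix.mul_assoc, hG, nonsing_inv_mul _ hB, one_mulVec]
  -- `r j` is the inner product of `v` with `B G⁻¹ eⱼ`, whose squared length is `G⁻¹ j j`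
  set c := G⁻¹ *ᵥ Pi.single j 1
  have hrj : r j = (B *ᵥ c) ⬝ᵥ v := by
    rw [← single_one_dotProduct j r, hr', dotProduct_mulVec, ← mulVec_transpose, hGinv,
      dotProduct_mulVec, vecMul_transpose]
  have hBc : (B *ᵥ c) ⬝ᵥ (B *ᵥ c) = G⁻¹ j j := by
    rw [dotProduct_mulVec, ← mulVec_transpose, mulVec_mulVec, hG, mulVec_mulVec,
      mul_nonsing_inv _ hB, one_mulVec, single_one_dotProduct]
    change (G⁻¹ *ᵥ Pi.single j 1) j = _
    rw [mulVec_single_one, col_apply]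
  rw [hrj, ← hBc]
  simpa only [dotProduct, sq] using sum_mul_sq_le_sq_mul_sq univ (B *ᵥ c) v

theorem Matrix.abs_apply_le_of_mulVec_eq {n ι : Type*} [Fintype n] [Fintype ι] [DecidableEq ι]
    (A : Matrix n ι ℤ) (hA : Function.Injective (A.map (Int.cast : ℤ → ℝ)).mulVec) {K : ℝ}
    (hK : exp 1 ≤ K) (hrow : ∀ x, ∑ p, (A x p : ℝ) ^ 2 ≤ K) {v : n → ℝ}
    (hv : ∀ x, |v x| ≤ 1) {r : ι → ℝ} (hr : A.map (Int.cast : ℤ → ℝ) *ᵥ r = v) (j : ι) :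
    |r j| ≤ √(Fintype.card n) * K ^ ((Fintype.card n : ℝ) / 2) := by
  set B := A.map (Int.cast : ℤ → ℝ)
  set N := Fintype.card n
  have hK0 : 0 ≤ K := (exp_pos 1).le.trans hK
  have hGpd : (Bᵀ * B).PosDef := by
    simpa [conjTranspose_eq_transpose_of_trivial] using PosDef.conjTranspose_mul_self B hA
  have hdet : 1 ≤ (Bᵀ * B).det := by
    have hGint : Bᵀ * B = (Aᵀ * A).map (Int.cast : ℤ → ℝ) := by
      ext i l
      simp [B, mul_apply]
    rw [hGint] at hGpd ⊢
    exact one_le_det_map_intCast _ hGpd.det_pos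
  have hcard : Fintype.card ι ≤ N := by
    simpa [N] using (mulVec_injective_iff.mp hA).fintype_card_le_finrank
  have htr : (Bᵀ * B).trace ≤ N * K :=
    calc (Bᵀ * B).trace = ∑ x, ∑ p, (A x p : ℝ) ^ 2 := by simp [trace_transpose_mul_self, B]
      _ ≤ ∑ _x : n, K := sum_le_sum fun x _ => hrow x
      _ = N * K := by simp [N]
  have hsq : r j ^ 2 ≤ N * K ^ N :=
    calc r j ^ 2 ≤ (Bᵀ * B)⁻¹ j j * (v ⬝ᵥ v) :=
          sq_apply_le_of_mulVec_eq B hGpd.det_pos.ne'.isUnit hr j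
      _ ≤ K ^ N * N := by
          refine mul_le_mul ?_ (dotProduct_self_le_card hv)
            (sum_nonneg fun x _ => mul_self_nonneg _) (pow_nonneg hK0 N)
          exact (hGpd.posSemidef.inv_apply_self_le_adjugate hdet j).trans
            (hGpd.posSemidef.adjugate_apply_self_le hK hcard htr j)
      _ = N * K ^ N := mul_comm _ _
  calc |r j| ≤ √(N * K ^ N) := abs_le_sqrt hsq
    _ = √N * K ^ ((N : ℝ) / 2) := by
      rw [sqrt_mul (Nat.cast_nonneg _), sqrt_eq_rpow (K ^ N), ← rpow_natCast, ← rpow_mul hK0]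
      ring_nf

theorem Matrix.exists_mulVec_eq_abs_le {n κ : Type*} [Fintype n] [Fintype κ] (A : Matrix n κ ℤ)
    {K : ℝ} (hK : exp 1 ≤ K) (hrow : ∀ x, ∑ p, (A x p : ℝ) ^ 2 ≤ K) {v : n → ℝ}
    (hv : ∀ x, |v x| ≤ 1) (hsol : v ∈ Set.range (A.map (Int.cast : ℤ → ℝ)).mulVec) :
    ∃ w : κ → ℝ, A.map (Int.cast : ℤ → ℝ) *ᵥ w = v ∧
      ∀ p, |w p| ≤ √(Fintype.card n) * K ^ ((Fintype.card n : ℝ) / 2) := by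
  classical
  set B := A.map (Int.cast : ℤ → ℝ)
  obtain ⟨ι, a, ha, hspan, hli⟩ := exists_linearIndependent' ℝ B.col
  have : Fintype ι := have := Finite.of_injective a ha; Fintype.ofFinite ι
  obtain ⟨r, hr⟩ : v ∈ Set.range (B.submatrix id a).mulVec := by
    have hmem : v ∈ LinearMap.range B.mulVecLin := hsol
    have hcol : (B.submatrix id a).col = B.col ∘ a := rfl
    rwa [range_mulVecLin, ← hspan, ← hcol, ← range_mulVecLin] at hmem
  have hinj : Function.Injective (B.submatrix id a).mulVec := mulVec_injective_iff.mpr hli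
  have hrow' (x : n) : ∑ t, (A x (a t) : ℝ) ^ 2 ≤ K := by
    refine le_trans ?_ (hrow x)
    simpa using sum_le_univ_sum_of_nonneg (s := univ.map ⟨a, ha⟩) fun p => sq_nonneg (A x p : ℝ)
  refine ⟨Function.extend a r 0, ?_, fun p => ?_⟩
  · rw [← hr]
    ext x
    exact (Fintype.sum_of_injective a ha _ _
      (fun p hp => by rw [Function.extend_apply' _ _ _ hp, Pi.zero_apply, mul_zero])
      (fun t => by rw [ha.extend_apply]; rfl)).symm
  · by_cases hp : ∃ t, a t = p
    · obtain ⟨t, rfl⟩ := hp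
      rw [ha.extend_apply]
      rw [submatrix_map] at hr hinj
      exact abs_apply_le_of_mulVec_eq _ hinj hK hrow' hv hr t
    · rw [Function.extend_apply' _ _ _ hp, Pi.zero_apply, abs_zero]
      exact mul_nonneg (sqrt_nonneg _) (rpow_nonneg ((exp_pos 1).le.trans hK) _)

def signalMatrix {κ n S : Type*} [DecidableEq S] (Φ : κ → n → S) : Matrix n (κ × S) ℤ :=
  Matrix.of fun x p => if Φ p.1 x = p.2 then 1 else 0

theorem signalMatrix_mulVec {κ n S : Type*} [Fintype κ] [Fintype S] [DecidableEq S]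
    (Φ : κ → n → S) (w : κ × S → ℝ) (x : n) :
    ((signalMatrix Φ).map (Int.cast : ℤ → ℝ) *ᵥ w) x = ∑ c, w (c, Φ c x) := by
  simp [signalMatrix, mulVec, dotProduct, Fintype.sum_prod_type]

theorem sum_signalMatrix_sq {κ n S : Type*} [Fintype κ] [Fintype S] [DecidableEq S]
    (Φ : κ → n → S) (x : n) :
    ∑ p, ((signalMatrix Φ x p : ℤ) : ℝ) ^ 2 = Fintype.card κ := by
  rw [Fintype.sum_prod_type]
  simp [signalMatrix]

/-- Proposition 7: if the loss difference of actions `a` and `b` can be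
globally estimated, the estimation function can be chosen with magnitude at
most `d^{1/2} k^{d/2}`. -/
theorem stmt13 (k d : ℕ) (hk : 3 ≤ k) (S : Type*) [Fintype S]
    (L : Fin k → Fin d → ℝ) (hL : ∀ a x, L a x ∈ Set.Icc (0 : ℝ) 1)
    (Φ : Fin k → Fin d → S) (a b : Fin k)
    (w : Fin k → S → ℝ)
    (hw : ∀ x, ∑ c, w c (Φ c x) = L a x - L b x) :
    ∃ w' : Fin k → S → ℝ,
      (∀ x, ∑ c, w' c (Φ c x) = L a x - L b x) ∧
      (∀ (c : Fin k) (σ : S),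
        |w' c σ| ≤ Real.sqrt d * (k : ℝ) ^ ((d : ℝ) / 2)) := by
  classical
  have hK : exp 1 ≤ k :=
    (exp_one_lt_d9.trans (by norm_num : (2.7182818286 : ℝ) < 3)).le.trans (by exact_mod_cast hk)
  have hv (x : Fin d) : |L a x - L b x| ≤ 1 := by
    have := hL a x
    have := hL b x
    rw [Set.mem_Icc] at *
    exact abs_sub_le_iff.mpr ⟨by linarith, by linarith⟩
  obtain ⟨w', hw', hbound⟩ := (signalMatrix Φ).exists_mulVec_eq_abs_le hK
    (fun x => by simp [sum_signalMatrix_sq]) hv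
    ⟨fun p => w p.1 p.2, funext fun x => by rw [signalMatrix_mulVec, hw x]⟩
  refine ⟨fun c σ => w' (c, σ), fun x => ?_, fun c σ => by simpa using hbound (c, σ)⟩
  rw [← signalMatrix_mulVec, hw']
end

section
/- Let V₁ and V₂ be disjoint finite sets with |V₁| = |V₂| = m, V = V₁ ∪ V₂, and let E ⊆ V₁ × V₂ be the edge set of a bipartite graph on V. Let f : V → ℝ be a function such that f(u) + f(v) ∈ [0,1] for every edge (u,v) ∈ E. Then there exists a function g : V → ℝ such that: (a) |g(v)| ≤ m/2 for all v ∈ V; and (b) g(u) + g(v) = f(u) + f(v) for every edge (u,v) ∈ E. -/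
/-!
Call two vertices of `V1` linked when they have a common neighbour. Linked vertices `a`, `b`
satisfy `|f a - f b| ≤ 1`, since both edge sums through the common neighbour lie in `[0, 1]`;
a linked component has at most `m` vertices, so `f` varies by at most `m - 1` on it. With `A`
the maximum of `f` on the component, put `g = f - A + m/2` on `V1` and `g = f + A - m/2` on
`V2`: both ends of every edge see the same `A`, so edge sums are unchanged, and the bounds
`f ≤ A ≤ f + (m - 1)` together with `f u + f v ∈ [0, 1]` give `|g| ≤ m/2`.
-/

namespace SimpleGraph

variable {α : Type*} {G : SimpleGraph α} {F : α → ℝ}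

lemma Walk.abs_sub_le_length (hF : ∀ a b, G.Adj a b → |F a - F b| ≤ 1) {a b : α}
    (w : G.Walk a b) : |F a - F b| ≤ w.length := by
  induction w with
  | nil => simp
  | @cons a c b hadj _ ih =>
    have := hF a c hadj
    have := abs_sub_le (F a) (F c) (F b)
    push_cast [Walk.length_cons]
    linarith

lemma Reachable.abs_sub_le_card_sub_one [Fintype α]
    (hF : ∀ a b, G.Adj a b → |F a - F b| ≤ 1) {a b : α} (h : G.Reachable a b) :
    |F a - F b| ≤ (Fintype.card α : ℝ) - 1 := by
  classical
  obtain ⟨w⟩ := h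
  have hlen : (w.toPath.1.length : ℝ) + 1 ≤ Fintype.card α := by
    exact_mod_cast w.toPath.2.length_lt
  linarith [w.toPath.1.abs_sub_le_length hF]

lemma exists_reachable_eq_and_le_le_card [Fintype α]
    (hF : ∀ a b, G.Adj a b → |F a - F b| ≤ 1) :
    ∃ A : α → ℝ, (∀ a b, G.Reachable a b → A a = A b) ∧
      ∀ a, F a ≤ A a ∧ A a ≤ F a + ((Fintype.card α : ℝ) - 1) := by
  classical
  let comp (a : α) : Finset α := Finset.univ.filter (G.Reachable a)
  have mem_comp (a : α) : a ∈ comp a := by simp [comp]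
  refine ⟨fun a => (comp a).sup' ⟨a, mem_comp a⟩ F, fun a b hab => ?_, fun a => ⟨?_, ?_⟩⟩
  · refine Finset.sup'_congr _ ?_ fun _ _ => rfl
    ext c
    simpa [comp] using ⟨hab.symm.trans, hab.trans⟩
  · exact Finset.le_sup' F (mem_comp a)
  · refine Finset.sup'_le _ _ fun c hc => ?_
    have hac : G.Reachable a c := by simpa [comp] using hc
    linarith [(abs_le.1 (hac.abs_sub_le_card_sub_one hF)).1]

end SimpleGraph

section Bipartite

variable {V : Type*} {m : ℕ} {V1 V2 : Finset V} {E : Finset (V × V)} {f : V → ℝ}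

lemma exists_abs_le_half_of_level (hdisj : Disjoint V1 V2)
    (hE : ∀ e ∈ E, e.1 ∈ V1 ∧ e.2 ∈ V2) (hf : ∀ e ∈ E, f e.1 + f e.2 ∈ Set.Icc (0 : ℝ) 1)
    (A : V1 → ℝ) (hA_eq : ∀ (a b : V1) w, ((a : V), w) ∈ E → ((b : V), w) ∈ E → A a = A b)
    (hA : ∀ a : V1, f a ≤ A a ∧ A a ≤ f a + ((m : ℝ) - 1)) :
    ∃ g : V → ℝ, (∀ v, |g v| ≤ (m : ℝ) / 2) ∧
      (∀ e ∈ E, g e.1 + g e.2 = f e.1 + f e.2) := by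
  classical
  refine ⟨fun v => if hv : v ∈ V1 then f v - A ⟨v, hv⟩ + m / 2
      else if hw : ∃ a : V1, ((a : V), v) ∈ E then f v + A hw.choose - m / 2 else 0,
    fun v => ?_, fun e he => ?_⟩
  · dsimp only
    split_ifs with hv hw
    · obtain ⟨hlo, hhi⟩ := hA ⟨v, hv⟩
      exact abs_le.2 ⟨by linarith, by linarith⟩
    · obtain ⟨hlo, hhi⟩ := hA hw.choose
      obtain ⟨hsum_lo, hsum_hi⟩ := hf _ hw.choose_spec
      exact abs_le.2 ⟨by linarith, by linarith⟩
    · rw [abs_zero]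
      positivity
  · obtain ⟨hu, hv⟩ := hE e he
    have hv1 : e.2 ∉ V1 := Finset.disjoint_right.1 hdisj hv
    have hw : ∃ a : V1, ((a : V), e.2) ∈ E := ⟨⟨e.1, hu⟩, he⟩
    simp only [dif_pos hu, dif_neg hv1, dif_pos hw, hA_eq hw.choose ⟨e.1, hu⟩ e.2 hw.choose_spec he]
    ring

end Bipartite

theorem stmt14_general (V : Type*) (m : ℕ)
    (V1 V2 : Finset V) (hdisj : Disjoint V1 V2)
    (h1 : V1.card = m)
    (E : Finset (V × V)) (hE : ∀ e ∈ E, e.1 ∈ V1 ∧ e.2 ∈ V2)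
    (f : V → ℝ) (hf : ∀ e ∈ E, f e.1 + f e.2 ∈ Set.Icc (0 : ℝ) 1) :
    ∃ g : V → ℝ, (∀ v, |g v| ≤ (m : ℝ) / 2) ∧
      (∀ e ∈ E, g e.1 + g e.2 = f e.1 + f e.2) := by
  let linked (a b : V1) : Prop := ∃ w, ((a : V), w) ∈ E ∧ ((b : V), w) ∈ E
  have abs_sub_le_of_linked {a b : V1} : linked a b → |f a - f b| ≤ 1 := by
    rintro ⟨w, ha, hb⟩
    obtain ⟨ha0, ha1⟩ := hf _ ha
    obtain ⟨hb0, hb1⟩ := hf _ hb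
    exact abs_le.2 ⟨by linarith, by linarith⟩
  obtain ⟨A, hA_reach, hA⟩ := (SimpleGraph.fromRel linked).exists_reachable_eq_and_le_le_card
    (F := fun a => f a) fun a b hab => by
      rcases hab.2 with hab | hba
      · exact abs_sub_le_of_linked hab
      · exact abs_sub_comm (f a) (f b) ▸ abs_sub_le_of_linked hba
  rw [Fintype.card_coe, h1] at hA
  refine exists_abs_le_half_of_level hdisj hE hf A (fun a b w ha hb => ?_) hA
  by_cases hab : a = b
  · rw [hab]
  · exact hA_reach a b (SimpleGraph.Adj.reachable ⟨hab, .inl ⟨w, ha, hb⟩⟩)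

/-- Lemma 10: shifting the values of a function on a bipartite graph so that
edge sums are preserved and all values are bounded by `m/2`. -/
theorem stmt14 (V : Type*) [Fintype V] [DecidableEq V] (m : ℕ)
    (V1 V2 : Finset V) (hdisj : Disjoint V1 V2)
    (h1 : V1.card = m) (h2 : V2.card = m)
    (hcover : V1 ∪ V2 = Finset.univ)
    (E : Finset (V × V)) (hE : ∀ e ∈ E, e.1 ∈ V1 ∧ e.2 ∈ V2)
    (f : V → ℝ) (hf : ∀ e ∈ E, f e.1 + f e.2 ∈ Set.Icc (0 : ℝ) 1) :
    ∃ g : V → ℝ, (∀ v, |g v| ≤ (m : ℝ) / 2) ∧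
      (∀ e ∈ E, g e.1 + g e.2 = f e.1 + f e.2) :=
  stmt14_general V m V1 V2 hdisj h1 E hE f hf
end

section
/- Let k ≥ 3 be an integer and let A be a nonzero positive semidefinite real d×d matrix all of whose entries are integers belonging to {0, 1, …, k}. Then every nonzero eigenvalue of A is at least k^{−d}. -/
/-!
The eigenvalues `λᵢ` of `A` are nonnegative, and the characteristic polynomial `∏ (X - λᵢ)` has
integer coefficients. Its coefficient of `X ^ m`, where `m` is the multiplicity of the eigenvalue
`0`, is `±` the product of the nonzero eigenvalues; being a nonzero integer, that product is at
least `1`. So a nonzero eigenvalue `μ` is at least the inverse of the product `Q` of the other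
nonzero eigenvalues. Their sum is at most `tr A ≤ d k`, and `x ≤ k e^{x/k - 1}` bounds `Q` by
`k ^ s e ^ (d - s) ≤ k ^ d`, where `s ≤ d` is their number and `e ≤ k` is where `k ≥ 3` enters.
-/

open Polynomial Matrix Finset

theorem Polynomial.one_le_abs_prod_ne_zero_of_map_eq_prod_X_sub_C {ι : Type*} [Fintype ι]
    (p : ℤ[X]) (r : ι → ℝ) (hp : p.map (Int.castRingHom ℝ) = ∏ i, (X - C (r i))) :
    1 ≤ |∏ i ∈ univ.filter (r · ≠ 0), r i| := by
  classical
  set S := univ.filter (r · ≠ 0)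
  set m := #(univ.filter (r · = 0))
  have hsplit : ∏ i, (X - C (r i)) = (∏ i ∈ S, (X - C (r i))) * X ^ m := by
    rw [← prod_filter_mul_prod_filter_not univ (r · ≠ 0), ← prod_const]
    congr 1
    simp only [ne_eq, not_not]
    exact prod_congr rfl fun i hi => by simp [(mem_filter.mp hi).2]
  have hcoeff : (p.coeff m : ℝ) = ∏ i ∈ S, -r i := by
    have hX := coeff_mul_X_pow (∏ i ∈ S, (X - C (r i))) m 0
    rw [zero_add, ← hsplit, ← hp, coeff_map, coeff_zero_eq_eval_zero, eval_prod] at hX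
    simpa using hX
  have hne : p.coeff m ≠ 0 := by
    rw [← Int.cast_ne_zero (α := ℝ), hcoeff]
    exact prod_ne_zero_iff.mpr fun i hi => neg_ne_zero.mpr (mem_filter.mp hi).2
  calc (1 : ℝ) ≤ |(p.coeff m : ℝ)| := by exact_mod_cast Int.one_le_abs hne
    _ = |∏ i ∈ S, r i| := by simp [hcoeff, prod_neg, abs_mul]

theorem Finset.prod_le_pow_of_sum_le_mul {ι : Type*} (s : Finset ι) (x : ι → ℝ) {k : ℝ} {n : ℕ}
    (hk : Real.exp 1 ≤ k) (hx : ∀ i ∈ s, 0 ≤ x i) (hsum : ∑ i ∈ s, x i ≤ n * k)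
    (hcard : #s ≤ n) : ∏ i ∈ s, x i ≤ k ^ n := by
  have hk0 : 0 < k := (Real.exp_pos 1).trans_le hk
  have hpoint : ∀ i ∈ s, x i ≤ k * Real.exp (x i / k - 1) := fun i _ => by
    have := Real.add_one_le_exp (x i / k - 1)
    rw [sub_add_cancel, div_le_iff₀' hk0] at this
    nlinarith [this]
  have hexp : ∑ i ∈ s, (x i / k - 1) ≤ ((n - #s : ℕ) : ℝ) := by
    rw [sum_sub_distrib, ← sum_div, Nat.cast_sub hcard, sum_const, nsmul_one]
    gcongr
    rwa [div_le_iff₀ hk0]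
  calc ∏ i ∈ s, x i ≤ ∏ i ∈ s, k * Real.exp (x i / k - 1) := prod_le_prod hx hpoint
    _ = k ^ #s * Real.exp (∑ i ∈ s, (x i / k - 1)) := by
      rw [prod_mul_distrib, prod_const, Real.exp_sum]
    _ ≤ k ^ #s * Real.exp ((n - #s : ℕ) : ℝ) := by gcongr
    _ = k ^ #s * Real.exp 1 ^ (n - #s) := by rw [← Real.exp_nat_mul, mul_one]
    _ ≤ k ^ #s * k ^ (n - #s) := by gcongr
    _ = k ^ n := by rw [← pow_add, Nat.add_sub_cancel' hcard]

namespace Matrix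

variable {n : Type*} [Fintype n] [DecidableEq n] {A : Matrix n n ℝ}

theorem IsHermitian.one_le_abs_prod_eigenvalues_ne_zero (hA : A.IsHermitian)
    (hZ : ∀ i j, ∃ z : ℤ, A i j = z) :
    1 ≤ |∏ i ∈ univ.filter (hA.eigenvalues · ≠ 0), hA.eigenvalues i| := by
  choose B hB using hZ
  refine one_le_abs_prod_ne_zero_of_map_eq_prod_X_sub_C (Matrix.of B).charpoly _ ?_
  have hBA : (Matrix.of B).map (Int.castRingHom ℝ) = A := by
    ext i j
    simp [hB]
  rw [← charpoly_map, hBA, hA.charpoly_eq]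
  simp

theorem IsHermitian.sum_eigenvalues_le (hA : A.IsHermitian) {c : ℝ} (hc : ∀ i, A i i ≤ c) :
    ∑ i, hA.eigenvalues i ≤ Fintype.card n * c := by
  have htrace := hA.trace_eq_sum_eigenvalues
  simp only [RCLike.ofReal_real_eq_id, id_eq] at htrace
  rw [← htrace, trace]
  simpa using sum_le_sum fun i (_ : i ∈ univ) => hc i

theorem IsHermitian.mem_range_eigenvalues_of_mulVec_eq_smul (hA : A.IsHermitian) {v : n → ℝ}
    {μ : ℝ} (hv : v ≠ 0) (hAv : A *ᵥ v = μ • v) : μ ∈ Set.range hA.eigenvalues := by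
  rw [← hA.spectrum_real_eq_range_eigenvalues, spectrum.mem_iff, isUnit_iff_isUnit_det,
    isUnit_iff_ne_zero, not_not, ← exists_mulVec_eq_zero_iff]
  exact ⟨v, hv, by simp [sub_mulVec, hAv, Algebra.algebraMap_eq_smul_one, smul_mulVec]⟩

theorem PosSemidef.one_le_eigenvalue_mul_prod_erase (hA : A.PosSemidef)
    (hZ : ∀ i j, ∃ z : ℤ, A i j = z) {i : n} (hi : hA.isHermitian.eigenvalues i ≠ 0) :
    1 ≤ hA.isHermitian.eigenvalues i *
      ∏ j ∈ (univ.filter (hA.isHermitian.eigenvalues · ≠ 0)).erase i,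
        hA.isHermitian.eigenvalues j := by
  rw [mul_prod_erase _ _ (mem_filter.mpr ⟨mem_univ i, hi⟩)]
  exact (hA.isHermitian.one_le_abs_prod_eigenvalues_ne_zero hZ).trans_eq
    (abs_of_nonneg (prod_nonneg fun j _ => hA.eigenvalues_nonneg j))

end Matrix

theorem stmt15_general (k d : ℕ) (hk : 3 ≤ k)
    (A : Matrix (Fin d) (Fin d) ℝ) (hpsd : A.PosSemidef)
    (hint : ∀ i j, ∃ z : ℤ, 0 ≤ z ∧ z ≤ (k : ℤ) ∧ A i j = (z : ℝ)) :
    ∀ μ : ℝ, μ ≠ 0 →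
      (∃ v : Fin d → ℝ, v ≠ 0 ∧ A.mulVec v = μ • v) →
      ((k : ℝ) ^ d)⁻¹ ≤ μ := by
  rintro μ hμ ⟨v, hv, hAv⟩
  have hA := hpsd.isHermitian
  obtain ⟨i, rfl⟩ := hA.mem_range_eigenvalues_of_mulVec_eq_smul hv hAv
  set others := (univ.filter (hA.eigenvalues · ≠ 0)).erase i
  have hpos : 0 < ∏ j ∈ others, hA.eigenvalues j := prod_pos fun j hj =>
    (hpsd.eigenvalues_nonneg j).lt_of_ne' (mem_filter.mp (mem_of_mem_erase hj)).2
  have hprod : 1 ≤ hA.eigenvalues i * ∏ j ∈ others, hA.eigenvalues j :=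
    hpsd.one_le_eigenvalue_mul_prod_erase (fun i j => (hint i j).imp fun _ hz => hz.2.2) hμ
  have htrace : ∑ j, hA.eigenvalues j ≤ d * k := by
    simpa using hA.sum_eigenvalues_le fun j => by
      obtain ⟨z, -, hzk, hz⟩ := hint j j
      rw [hz]
      exact_mod_cast hzk
  have hrest : ∏ j ∈ others, hA.eigenvalues j ≤ (k : ℝ) ^ d :=
    prod_le_pow_of_sum_le_mul _ _ (Real.exp_one_lt_three.le.trans (by exact_mod_cast hk))
      (fun j _ => hpsd.eigenvalues_nonneg j)
      ((sum_le_sum_of_subset_of_nonneg (subset_univ _)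
        fun j _ _ => hpsd.eigenvalues_nonneg j).trans htrace)
      (by simpa using card_le_univ others)
  calc ((k : ℝ) ^ d)⁻¹ ≤ (∏ j ∈ others, hA.eigenvalues j)⁻¹ := inv_anti₀ hpos hrest
    _ ≤ hA.eigenvalues i := by rwa [inv_le_iff_one_le_mul₀ hpos]

/-- Lemma 11: every nonzero eigenvalue of a nonzero positive semidefinite
matrix with integer entries in `{0, …, k}` (for `k ≥ 3`) is at least `k^{-d}`. -/
theorem stmt15 (k d : ℕ) (hk : 3 ≤ k)
    (A : Matrix (Fin d) (Fin d) ℝ) (hA : A ≠ 0) (hpsd : A.PosSemidef)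
    (hint : ∀ i j, ∃ z : ℤ, 0 ≤ z ∧ z ≤ (k : ℤ) ∧ A i j = (z : ℝ)) :
    ∀ μ : ℝ, μ ≠ 0 →
      (∃ v : Fin d → ℝ, v ≠ 0 ∧ A.mulVec v = μ • v) →
      ((k : ℝ) ^ d)⁻¹ ≤ μ :=
  stmt15_general k d hk A hpsd hint
end

section
/- Let (a_t)_{t=1}^n be a sequence of non-negative real numbers. Then Σ_{t=1}^n a_t / √(1 + Σ_{s=1}^{t−1} a_s) ≤ 4 √(1 + (1/2) Σ_{t=1}^n a_t) + max_{t ∈ [n]} a_t. -/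
/-- Lemma 8: a bound on the sum `∑_t a_t / √(1 + ∑_{s<t} a_s)`. -/
theorem stmt16 (n : ℕ) (hn : 0 < n) (a : ℕ → ℝ) (ha : ∀ i, 0 ≤ a i) :
    ∑ t ∈ Finset.range n, a t / Real.sqrt (1 + ∑ s ∈ Finset.range t, a s)
      ≤ 4 * Real.sqrt (1 + (1 / 2) * ∑ t ∈ Finset.range n, a t)
        + (Finset.range n).sup' (Finset.nonempty_range_iff.mpr hn.ne') a := by
  set M := (Finset.range n).sup' (Finset.nonempty_range_iff.mpr hn.ne') a with hM
  have hMa : ∀ t ∈ Finset.range n, a t ≤ M := fun t ht => Finset.le_sup' a ht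
  have hM0 : 0 ≤ M := le_trans (ha 0) (hMa 0 (Finset.mem_range.mpr hn))
  set S : ℕ → ℝ := fun t => ∑ s ∈ Finset.range t, a s with hS
  have hS0 : ∀ t, 0 ≤ S t := fun t => Finset.sum_nonneg fun i _ => ha i
  set T : ℕ → ℝ := fun t => Real.sqrt (1 + S t / 2) with hT
  have hT1 : ∀ t, (1:ℝ) ≤ T t := by
    intro t
    rw [hT]
    have : (1:ℝ) = Real.sqrt 1 := by simp
    nth_rewrite 1 [this]
    exact Real.sqrt_le_sqrt (by linarith [hS0 t])
  have hTsq : ∀ t, (T t) ^ 2 = 1 + S t / 2 := by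
    intro t
    rw [hT]
    exact Real.sq_sqrt (by linarith [hS0 t])
  have hstep : ∀ t, S (t + 1) = S t + a t := by
    intro t
    simp [hS, Finset.sum_range_succ]
  have key : ∀ t ∈ Finset.range n,
      a t / Real.sqrt (1 + S t) ≤ 4 * (T (t+1) - T t) + M * (1 / T t - 1 / T (t+1)) := by
    intro t ht
    have hu1 : (1:ℝ) ≤ T t := hT1 t
    have hv1 : (1:ℝ) ≤ T (t+1) := hT1 (t+1)
    have hu0 : 0 < T t := by linarith
    have hv0 : 0 < T (t+1) := by linarith
    have huv : T t ≤ T (t+1) := by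
      rw [hT]
      exact Real.sqrt_le_sqrt (by rw [hstep t]; linarith [ha t])
    have hvsq : (T (t+1))^2 = (T t)^2 + a t / 2 := by
      rw [hTsq, hTsq, hstep t]; ring
    -- first: a t / √(1 + S t) ≤ a t / T t
    have h1 : a t / Real.sqrt (1 + S t) ≤ a t / T t := by
      rcases eq_or_lt_of_le (ha t) with h | h
      · rw [← h]; simp
      · apply div_le_div_of_nonneg_left (le_of_lt h) hu0
        rw [hT]
        exact Real.sqrt_le_sqrt (by linarith [hS0 t])
    refine h1.trans ?_
    -- a/u ≤ 4(v-u) + a(1/u - 1/v) ≤ 4(v-u) + M(1/u - 1/v)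
    have h2' : a t * T (t+1) ≤ 4 * (T (t+1) - T t) * (T t * T (t+1))
        + a t * (T (t+1) - T t) := by
      nlinarith [sq_nonneg (T (t+1) - T t), hvsq, mul_nonneg (le_of_lt hu0) (sq_nonneg (T (t+1) - T t))]
    have h2 : a t / T t ≤ 4 * (T (t+1) - T t) + a t * (1 / T t - 1 / T (t+1)) := by
      rw [← sub_nonneg]
      have heq : 4 * (T (t+1) - T t) + a t * (1 / T t - 1 / T (t+1)) - a t / T t
          = (4 * (T (t+1) - T t) * (T t * T (t+1)) + a t * (T (t+1) - T t)
              - a t * T (t+1)) / (T t * T (t+1)) := by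
        field_simp
      rw [heq]
      exact div_nonneg (by linarith [h2']) (by positivity)
    refine h2.trans ?_
    have h3 : 0 ≤ 1 / T t - 1 / T (t+1) := by
      have := one_div_le_one_div_of_le hu0 huv
      linarith
    have h4 : a t * (1 / T t - 1 / T (t+1)) ≤ M * (1 / T t - 1 / T (t+1)) :=
      mul_le_mul_of_nonneg_right (hMa t ht) h3
    linarith
  have hsum := Finset.sum_le_sum key
  have htel1 : ∑ t ∈ Finset.range n, (T (t+1) - T t) = T n - T 0 :=
    Finset.sum_range_sub T n
  have htel2 : ∑ t ∈ Finset.range n, (1 / T t - 1 / T (t+1)) = 1 / T 0 - 1 / T n :=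
    Finset.sum_range_sub' (fun t => 1 / T t) n
  have hT0 : T 0 = 1 := by
    simp only [hT, hS]
    simp
  have hsplit : ∑ t ∈ Finset.range n,
      (4 * (T (t+1) - T t) + M * (1 / T t - 1 / T (t+1)))
      = 4 * (T n - T 0) + M * (1 / T 0 - 1 / T n) := by
    rw [Finset.sum_add_distrib, ← Finset.mul_sum, ← Finset.mul_sum, htel1, htel2]
  have hTn1 : (1:ℝ) ≤ T n := hT1 n
  have hinv : 0 ≤ 1 / T n := by positivity
  have hfin : 4 * (T n - T 0) + M * (1 / T 0 - 1 / T n) ≤ 4 * T n + M := by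
    rw [hT0]
    have : M * (1 / 1 - 1 / T n) ≤ M := by
      have h5 : 1 / 1 - 1 / T n ≤ 1 := by simp; linarith
      nlinarith [mul_nonneg hM0 hinv]
    linarith
  have hTn : T n = Real.sqrt (1 + (1 / 2) * ∑ t ∈ Finset.range n, a t) := by
    simp only [hT, hS]
    congr 1
    ring
  calc ∑ t ∈ Finset.range n, a t / Real.sqrt (1 + ∑ s ∈ Finset.range t, a s)
      = ∑ t ∈ Finset.range n, a t / Real.sqrt (1 + S t) := rfl
    _ ≤ ∑ t ∈ Finset.range n, (4 * (T (t+1) - T t) + M * (1 / T t - 1 / T (t+1))) := hsum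
    _ = 4 * (T n - T 0) + M * (1 / T 0 - 1 / T n) := hsplit
    _ ≤ 4 * T n + M := hfin
    _ = 4 * Real.sqrt (1 + (1 / 2) * ∑ t ∈ Finset.range n, a t) + M := by rw [hTn]
end

section
/- Let α > 0 and let (a_t)_{t=1}^n be a sequence of non-negative real numbers satisfying a_{t+1} ≤ a_t + α a_t^{1/4} for all 1 ≤ t ≤ n−1. Then a_n ≤ ( (3α(n−1))/4 + a_1^{3/4} )^{4/3}. -/
/-!
The map `x ↦ x ^ (3/4)` is concave with derivative `(3/4) x ^ (-1/4)`, so one step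
`x ↦ x + α x ^ (1/4)` raises `x ^ (3/4)` by at most `(3/4) x ^ (-1/4) · α x ^ (1/4) = 3α/4`.
Hence `a_t ^ (3/4)` grows at most linearly, by `3α/4` per step, and raising to the power `4/3`
gives the bound.
-/

open Real

namespace Real

theorem rpow_add_le_rpow_add_mul_rpow_sub_one {p x h : ℝ} (hp₀ : 0 ≤ p) (hp₁ : p ≤ 1)
    (hx : 0 < x) (hh : -x ≤ h) :
    (x + h) ^ p ≤ x ^ p + p * x ^ (p - 1) * h := by
  have hs : -1 ≤ h / x := by rwa [le_div_iff₀ hx, neg_one_mul]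
  calc (x + h) ^ p = x ^ p * (1 + h / x) ^ p := by
        rw [← mul_rpow hx.le (by linarith), mul_add, mul_div_cancel₀ h hx.ne', mul_one]
    _ ≤ x ^ p * (1 + p * (h / x)) :=
        mul_le_mul_of_nonneg_left (rpow_one_add_le_one_add_mul_self hs hp₀ hp₁) (by positivity)
    _ = x ^ p + p * x ^ (p - 1) * h := by rw [rpow_sub_one hx.ne']; ring

theorem rpow_three_quarters_add_mul_rpow_quarter_le {α x : ℝ} (hα : 0 ≤ α) (hx : 0 ≤ x) :
    (x + α * x ^ ((1 : ℝ) / 4)) ^ ((3 : ℝ) / 4) ≤ x ^ ((3 : ℝ) / 4) + 3 * α / 4 := by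
  rcases hx.eq_or_lt with rfl | hx
  · norm_num [zero_rpow]
    positivity
  have hcancel : x ^ ((3 : ℝ) / 4 - 1) * x ^ ((1 : ℝ) / 4) = 1 := by
    rw [← rpow_add hx]; norm_num
  calc (x + α * x ^ ((1 : ℝ) / 4)) ^ ((3 : ℝ) / 4)
      ≤ x ^ ((3 : ℝ) / 4) + 3 / 4 * x ^ ((3 : ℝ) / 4 - 1) * (α * x ^ ((1 : ℝ) / 4)) :=
        rpow_add_le_rpow_add_mul_rpow_sub_one (by norm_num) (by norm_num) hx
          (by have := rpow_nonneg hx.le ((1 : ℝ) / 4); nlinarith)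
    _ = x ^ ((3 : ℝ) / 4) + 3 * α / 4 := by linear_combination 3 * α / 4 * hcancel

end Real

theorem le_add_mul_sub_of_succ_le_add {c : ℕ → ℝ} {d : ℝ} {m n : ℕ} (hmn : m ≤ n)
    (hstep : ∀ t, m ≤ t → t < n → c (t + 1) ≤ c t + d) :
    c n ≤ c m + d * ((n : ℝ) - m) := by
  induction n, hmn using Nat.le_induction with
  | base => simp
  | succ k hmk ih =>
    calc c (k + 1) ≤ c k + d := hstep k hmk k.lt_succ_self
      _ ≤ c m + d * ((k : ℝ) - m) + d :=
          add_le_add_left (ih fun t hmt htk => hstep t hmt (htk.trans k.lt_succ_self)) d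
      _ = c m + d * (((k + 1 : ℕ) : ℝ) - m) := by push_cast; ring

/-- Lemma 9: a discrete Grönwall-type bound for `a_{t+1} ≤ a_t + α a_t^{1/4}`. -/
theorem stmt17 (n : ℕ) (hn : 1 ≤ n) (α : ℝ) (hα : 0 < α)
    (a : ℕ → ℝ) (ha : ∀ t, 0 ≤ a t)
    (hrec : ∀ t, 1 ≤ t → t ≤ n - 1 → a (t + 1) ≤ a t + α * a t ^ ((1 : ℝ) / 4)) :
    a n ≤ (3 * α * ((n : ℝ) - 1) / 4 + a 1 ^ ((3 : ℝ) / 4)) ^ ((4 : ℝ) / 3) := by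
  have hlinear : a n ^ ((3 : ℝ) / 4) ≤ a 1 ^ ((3 : ℝ) / 4) + 3 * α / 4 * ((n : ℝ) - 1) := by
    exact_mod_cast le_add_mul_sub_of_succ_le_add (c := fun t => a t ^ ((3 : ℝ) / 4)) hn
      fun t ht htn => (rpow_le_rpow (ha _) (hrec t ht (by omega)) (by norm_num)).trans
        (rpow_three_quarters_add_mul_rpow_quarter_le hα.le (ha t))
  calc a n = (a n ^ ((3 : ℝ) / 4)) ^ ((4 : ℝ) / 3) := by
        rw [← rpow_mul (ha n)]; norm_num
    _ ≤ (3 * α * ((n : ℝ) - 1) / 4 + a 1 ^ ((3 : ℝ) / 4)) ^ ((4 : ℝ) / 3) :=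
        rpow_le_rpow (rpow_nonneg (ha n) _) (by linarith) (by norm_num)
end
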